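/- arXiv:hep-th/9406140 — 3 statements merged into one kernel-verified Lean document; each statement's English description precedes it below -/
import Mathlib

section
/- In the setting of a central extension 0 → C → g̃ →p g → 0 with invariant symmetric form B as above, let x, x' ∈ g satisfy q(x) = q(x') = 1 with isotropic lifts x̃, x̃'. Define splittings Π_x̃, Π_x̃' : g → g̃ by sending y ∈ g to its unique lift ỹ with B(x̃,ỹ) = 0 (respectively B(x̃',ỹ) = 0). Then for all y ∈ g: (Π_x̃ − Π_x̃')(y) = B₀(y − q(y)(x+x')/2, x−x') · j(1), where B₀ is the induced form on ker q (note x−x' and y − q(y)(x+x')/2 lie in ker q). -/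
/-- Difference of the two splittings `Π_x̃` and `Π_x̃'` attached to
elements `x, x'` of `q`-value `1` (with isotropic lifts `xt, xt'`), evaluated
on `y`: it is the central element `B₀(y - q(y)(x+x')/2, x - x') · j(1)`,
where `B₀` is computed via arbitrary lifts (here `q(y) = -B(e, yt)`). -/
theorem splitting_difference_formula
    {gt g : Type*} [LieRing gt] [LieAlgebra ℂ gt] [LieRing g] [LieAlgebra ℂ g]
    (p : gt →ₗ⁅ℂ⁆ g) (hp : Function.Surjective p)
    (e : gt) (hcentral : ∀ y : gt, ⁅e, y⁆ = 0)
    (hker : ∀ x : gt, p x = 0 ↔ ∃ c : ℂ, x = c • e)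
    (B : gt →ₗ[ℂ] gt →ₗ[ℂ] ℂ)
    (hsymm : ∀ x y : gt, B x y = B y x)
    (hinv : ∀ x y z : gt, B ⁅x, z⁆ y + B x ⁅y, z⁆ = 0)
    (hee : B e e = 0)
    (x x' : g) (xt xt' : gt) (hxt : p xt = x) (hxt' : p xt' = x')
    -- `q(x) = q(x') = 1`, i.e. `-B(e, xt) = -B(e, xt') = 1`
    (hqx : B e xt = -1) (hqx' : B e xt' = -1)
    -- `xt`, `xt'` are the isotropic lifts
    (hiso : B xt xt = 0) (hiso' : B xt' xt' = 0)
    (y : g) (yt yt' : gt) (hyt : p yt = y) (hyt' : p yt' = y)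
    -- `yt = Π_x̃(y)` and `yt' = Π_x̃'(y)` are the lifts orthogonal to `xt`, `xt'`
    (hPi : B xt yt = 0) (hPi' : B xt' yt' = 0) :
    yt - yt' = (B (yt + (B e yt / 2) • (xt + xt')) (xt - xt')) • e := by
  have hker0 : p (yt - yt') = 0 := by simp [map_sub, hyt, hyt']
  obtain ⟨c, hc⟩ := (hker _).1 hker0
  have h1 : yt' = yt - c • e := by rw [← hc]; abel
  have hBe : B xt' e = -1 := by rw [hsymm]; exact hqx'
  have hBe2 : B xt e = -1 := by rw [hsymm]; exact hqx
  have hc2 : c = -(B xt' yt) := by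
    have h := hPi'
    rw [h1] at h
    simp [map_sub, map_smul, hBe, smul_eq_mul] at h
    linear_combination h
  rw [hc]
  congr 1
  simp only [map_add, map_sub, map_smul, LinearMap.add_apply, LinearMap.sub_apply,
    LinearMap.smul_apply, smul_eq_mul]
  rw [hsymm yt xt, hsymm xt' xt, hsymm yt xt']
  rw [hPi, hiso, hiso']
  linear_combination hc2
end

section
/- Given an exact sequence of Lie algebras 0 → g₀ →r g →q C → 0 over C and a symmetric bilinear form B₀ on g₀ invariant under the adjoint action of g, fix x ∈ g with q(x) = 1. Define on the vector space g̃_x := g ⊕ C the bracket [(r(a₁)+t₁x, c₁), (r(a₂)+t₂x, c₂)] := ([r(a₁)+t₁x, r(a₂)+t₂x], −B₀(r^{-1}[x,r(a₁)], a₂)). Then this bracket makes g̃_x a Lie algebra which is a central extension of g by C. -/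
/-!
Split `g = r(g₀) ⊕ ℂx` by the linear projection `P` with `r (P y) = y - q y • x`, and let `D` be
the restriction of `ad x` to `g₀`, a derivation. Then `ω y₁ y₂ = -B₀ (D (P y₁)) (P y₂)`, and
`P ⁅y, z⁆ = ⁅P y, P z⁆ + q y • D (P z) - q z • D (P y)` is the bracket of `g₀ ⋊_D ℂ`.
Antisymmetry of `ω` is `D`-invariance plus symmetry of `B₀`; the cocycle identity follows from
`ad`-invariance of `B₀` and the Leibniz rule for `D`. The first component of the bracket on
`g × ℂ` is that of `g`, so the Lie axioms for `g̃_x` reduce to these two properties of `ω`.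
-/

attribute [local instance 100] LieRing.ofAssociativeRing

open Function

theorem LinearMap.exists_apply_eq_of_forall_mem_range {R M N P : Type*} [Semiring R]
    [AddCommMonoid M] [Module R M] [AddCommMonoid N] [Module R N] [AddCommMonoid P] [Module R P]
    (r : M →ₗ[R] N) (hr : Injective r) (f : P →ₗ[R] N) (hf : ∀ p, f p ∈ LinearMap.range r) :
    ∃ h : P →ₗ[R] M, ∀ p, r (h p) = f p :=
  ⟨(LinearEquiv.ofInjective r hr).symm ∘ₗ f.codRestrict _ hf, fun p => by
    rw [← LinearEquiv.ofInjective_apply (h := hr)]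
    simp⟩

section InvariantForm

variable {R L : Type*} [CommRing R] [LieRing L] [LieAlgebra R L]
  {B : L →ₗ[R] L →ₗ[R] R} {D : L →ₗ[R] L}

theorem cocycle_identity_of_derivation (hsymm : ∀ a b, B a b = B b a)
    (hD : ∀ a b, D ⁅a, b⁆ = ⁅D a, b⁆ + ⁅a, D b⁆)
    (hBD : ∀ a b, B (D a) b = -B a (D b)) (hBlie : ∀ c a b : L, B ⁅c, a⁆ b = -B a ⁅c, b⁆)
    (a₁ a₂ a₃ : L) (s₁ s₂ s₃ : R) :
    B (D a₁) (⁅a₂, a₃⁆ + s₂ • D a₃ - s₃ • D a₂) =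
      B (D (⁅a₁, a₂⁆ + s₁ • D a₂ - s₂ • D a₁)) a₃ +
        B (D a₂) (⁅a₁, a₃⁆ + s₁ • D a₃ - s₃ • D a₁) := by
  have h₁ : B ⁅D a₁, a₂⁆ a₃ = B (D a₁) ⁅a₂, a₃⁆ := by
    rw [← lie_skew, map_neg, LinearMap.neg_apply, hBlie, neg_neg]
  simp only [map_add, map_sub, map_smul, hD, LinearMap.add_apply, LinearMap.sub_apply,
    LinearMap.smul_apply, smul_eq_mul]
  linear_combination -h₁ - hBlie a₁ (D a₂) a₃ - s₁ * hBD (D a₂) a₃ + s₂ * hBD (D a₁) a₃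
    - s₃ * hsymm (D a₁) (D a₂)

end InvariantForm

section ExactSequence

variable {R g₀ g : Type*} [CommRing R] [LieRing g₀] [LieAlgebra R g₀] [LieRing g] [LieAlgebra R g]

theorem LieHom.map_lie_eq_zero_of_commRing (q : g →ₗ⁅R⁆ R) (y z : g) : q ⁅y, z⁆ = 0 := by
  rw [LieHom.map_lie, Ring.lie_def, mul_comm, sub_self]

variable {r : g₀ →ₗ⁅R⁆ g} {q : g →ₗ⁅R⁆ R} {x : g}

theorem exists_proj_of_exact (hr : Injective r) (hexact : ∀ y, q y = 0 ↔ ∃ a, r a = y)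
    (hx : q x = 1) : ∃ P : g →ₗ[R] g₀, ∀ y, r (P y) = y - q y • x :=
  LinearMap.exists_apply_eq_of_forall_mem_range (r : g₀ →ₗ[R] g) hr
    (LinearMap.id - (q : g →ₗ[R] R).smulRight x) fun y =>
      (hexact _).mp (by simp [hx])

theorem exists_ad_restrict_of_exact (hr : Injective r) (hexact : ∀ y, q y = 0 ↔ ∃ a, r a = y) :
    ∃ D : g₀ →ₗ[R] g₀, ∀ a, r (D a) = ⁅x, r a⁆ :=
  LinearMap.exists_apply_eq_of_forall_mem_range (r : g₀ →ₗ[R] g) hr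
    ((LieAlgebra.ad R g x : Module.End R g) ∘ₗ (r : g₀ →ₗ[R] g)) fun _ =>
      (hexact _).mp (q.map_lie_eq_zero_of_commRing _ _)

theorem apply_lie_of_apply_eq_lie (hr : Injective r) {D : g₀ → g₀}
    (hD : ∀ a, r (D a) = ⁅x, r a⁆) (a b : g₀) : D ⁅a, b⁆ = ⁅D a, b⁆ + ⁅a, D b⁆ :=
  hr <| by rw [hD, LieHom.map_lie, map_add, LieHom.map_lie, LieHom.map_lie, hD, hD, leibniz_lie]

theorem proj_lie (hr : Injective r) {P : g →ₗ[R] g₀} {D : g₀ →ₗ[R] g₀}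
    (hP : ∀ y, r (P y) = y - q y • x) (hD : ∀ a, r (D a) = ⁅x, r a⁆) (y z : g) :
    P ⁅y, z⁆ = ⁅P y, P z⁆ + q y • D (P z) - q z • D (P y) := hr <| by
  rw [hP, q.map_lie_eq_zero_of_commRing, zero_smul, sub_zero, map_sub, map_add, LieHom.map_lie,
    map_smul, map_smul, hD, hD, hP, hP]
  simp only [sub_lie, lie_sub, smul_lie, lie_smul, lie_self, smul_zero, sub_zero]
  rw [← lie_skew x y]
  module

end ExactSequence

theorem cocycle_central_extension_general
    {g₀ g : Type*} [LieRing g₀] [LieAlgebra ℂ g₀] [LieRing g] [LieAlgebra ℂ g]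
    (r : g₀ →ₗ⁅ℂ⁆ g) (hr : Function.Injective r)
    (q : g →ₗ⁅ℂ⁆ ℂ)
    (hexact : ∀ y : g, q y = 0 ↔ ∃ a : g₀, r a = y)
    (B₀ : g₀ →ₗ[ℂ] g₀ →ₗ[ℂ] ℂ)
    (hsymm : ∀ a b : g₀, B₀ a b = B₀ b a)
    (hinv : ∀ (y : g) (a b a' b' : g₀), r a' = ⁅y, r a⁆ → r b' = ⁅y, r b⁆ →
      B₀ a' b + B₀ a b' = 0)
    (x : g) (hx : q x = 1)
    (ω : g → g → ℂ)
    (hω : ∀ (y₁ y₂ : g) (a₁ a₂ : g₀), r a₁ = ⁅x, y₁⁆ → r a₂ = y₂ - q y₂ • x →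
      ω y₁ y₂ = -B₀ a₁ a₂) :
    (∀ y₁ y₂ : g, ω y₁ y₂ = -ω y₂ y₁) ∧
    (∀ z : g × ℂ, (⁅z.1, z.1⁆, ω z.1 z.1) = (0 : g × ℂ)) ∧
    (∀ z₁ z₂ z₃ : g × ℂ,
      ((⁅z₁.1, ⁅z₂.1, z₃.1⁆⁆, ω z₁.1 ⁅z₂.1, z₃.1⁆) : g × ℂ) =
        (⁅⁅z₁.1, z₂.1⁆, z₃.1⁆, ω ⁅z₁.1, z₂.1⁆ z₃.1) +
        (⁅z₂.1, ⁅z₁.1, z₃.1⁆⁆, ω z₂.1 ⁅z₁.1, z₃.1⁆)) ∧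
    (∀ z : g × ℂ, ((⁅(0 : g), z.1⁆, ω 0 z.1) : g × ℂ) = 0) := by
  obtain ⟨P, hP⟩ := exists_proj_of_exact hr hexact hx
  obtain ⟨D, hD⟩ := exists_ad_restrict_of_exact (x := x) hr hexact
  have hωP : ∀ y₁ y₂, ω y₁ y₂ = -B₀ (D (P y₁)) (P y₂) := fun y₁ y₂ =>
    hω _ _ _ _ (by rw [hD, hP, lie_sub, lie_smul, lie_self, smul_zero, sub_zero]) (hP y₂)
  have hBD : ∀ a b, B₀ (D a) b = -B₀ a (D b) := fun a b =>
    eq_neg_of_add_eq_zero_left (hinv x a b _ _ (hD a) (hD b))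
  have hBlie : ∀ c a b, B₀ ⁅c, a⁆ b = -B₀ a ⁅c, b⁆ := fun c a b =>
    eq_neg_of_add_eq_zero_left (hinv (r c) a b _ _ (r.map_lie c a) (r.map_lie c b))
  have hanti : ∀ y₁ y₂ : g, ω y₁ y₂ = -ω y₂ y₁ := fun y₁ y₂ => by
    rw [hωP, hωP]
    linear_combination -hBD (P y₁) (P y₂) + hsymm (P y₁) (D (P y₂))
  refine ⟨hanti, fun z => Prod.ext (lie_self _) (self_eq_neg.mp (hanti _ _)),
    fun z₁ z₂ z₃ => ?_, fun z => Prod.ext (zero_lie _) (by simp [hωP])⟩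
  rw [Prod.mk_add_mk, Prod.mk.injEq]
  refine ⟨leibniz_lie _ _ _, ?_⟩
  simp only [hωP, proj_lie hr hP hD]
  linear_combination -cocycle_identity_of_derivation hsymm (apply_lie_of_apply_eq_lie hr hD) hBD
    hBlie (P z₁.1) (P z₂.1) (P z₃.1) (q z₁.1) (q z₂.1) (q z₃.1)

/-- Given an exact sequence `0 → g₀ →r g →q ℂ → 0` of complex Lie
algebras, a `g`-invariant symmetric bilinear form `B₀` on `g₀` and `x ∈ g` with
`q(x) = 1`, the bracket
`[(y₁,c₁),(y₂,c₂)] = ([y₁,y₂], -B₀(r⁻¹[x, pr₀ y₁], pr₀ y₂))`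
makes `g̃_x = g ⊕ ℂ` a Lie algebra which is a central extension of `g` by `ℂ`:
the cocycle `ω` is antisymmetric, the bracket is alternating and satisfies the
(Leibniz form of the) Jacobi identity, and `(0,1)` is central. -/
theorem cocycle_central_extension
    {g₀ g : Type*} [LieRing g₀] [LieAlgebra ℂ g₀] [LieRing g] [LieAlgebra ℂ g]
    (r : g₀ →ₗ⁅ℂ⁆ g) (hr : Function.Injective r)
    (q : g →ₗ⁅ℂ⁆ ℂ) (hq : Function.Surjective q)
    (hexact : ∀ y : g, q y = 0 ↔ ∃ a : g₀, r a = y)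
    (B₀ : g₀ →ₗ[ℂ] g₀ →ₗ[ℂ] ℂ)
    (hsymm : ∀ a b : g₀, B₀ a b = B₀ b a)
    (hinv : ∀ (y : g) (a b a' b' : g₀), r a' = ⁅y, r a⁆ → r b' = ⁅y, r b⁆ →
      B₀ a' b + B₀ a b' = 0)
    (x : g) (hx : q x = 1)
    (ω : g → g → ℂ)
    (hω : ∀ (y₁ y₂ : g) (a₁ a₂ : g₀), r a₁ = ⁅x, y₁⁆ → r a₂ = y₂ - q y₂ • x →
      ω y₁ y₂ = -B₀ a₁ a₂) :
    (∀ y₁ y₂ : g, ω y₁ y₂ = -ω y₂ y₁) ∧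
    (∀ z : g × ℂ, (⁅z.1, z.1⁆, ω z.1 z.1) = (0 : g × ℂ)) ∧
    (∀ z₁ z₂ z₃ : g × ℂ,
      ((⁅z₁.1, ⁅z₂.1, z₃.1⁆⁆, ω z₁.1 ⁅z₂.1, z₃.1⁆) : g × ℂ) =
        (⁅⁅z₁.1, z₂.1⁆, z₃.1⁆, ω ⁅z₁.1, z₂.1⁆ z₃.1) +
        (⁅z₂.1, ⁅z₁.1, z₃.1⁆⁆, ω z₂.1 ⁅z₁.1, z₃.1⁆)) ∧
    (∀ z : g × ℂ, ((⁅(0 : g), z.1⁆, ω 0 z.1) : g × ℂ) = 0) :=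
  cocycle_central_extension_general r hr q hexact B₀ hsymm hinv x hx ω hω
end

section
/- In the construction of the previous statement, the symmetric bilinear form B on g̃_x = g ⊕ C defined by B((r(a₁)+t₁x, c₁), (r(a₂)+t₂x, c₂)) := B₀(a₁,a₂) − c₁t₂ − c₂t₁ is invariant under the adjoint action of g̃_x, satisfies B(j(1),j(1)) = 0 where j(1) = (0,1), and B(j(1), (r(a)+tx, c)) = −t. -/
attribute [local instance 100] LieRing.ofAssociativeRing

/-!
Write `y = r a + (q y) x`. Since `ℂ` is abelian, `q` kills brackets, so `⁅y₁, y₂⁆ = r b` lies in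
`r g₀` and the cocycle term of the bracket of `g̃_x` only meets the `c t` part of the form. On the
other hand `⁅y₁, r a₂⁆ = r (b + (q y₂) c)` with `r c = ⁅x, y₁⁆`, so the `g₀`-invariance of `B₀`
produces exactly the extra terms `(q y₂) B₀(c, a₃) + (q y₃) B₀(a₂, c)` that the cocycle cancels,
once `B₀` is symmetric.
-/

section

variable {R A L₀ L : Type*} [CommRing R] [LieRing L₀] [LieAlgebra R L₀] [LieRing L]
  [LieAlgebra R L]

theorem LieHom.map_lie_eq_zero [CommRing A] [LieAlgebra R A] (f : L →ₗ⁅R⁆ A) (y z : L) :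
    f ⁅y, z⁆ = 0 := by
  rw [f.map_lie, (Commute.all _ _).lie_eq]

theorem map_add_smul_eq_lie_of_eq_sub_smul {r : L₀ →ₗ[R] L} {x y y₁ : L} {t : R} {a b c : L₀}
    (ha : r a = y - t • x) (hb : r b = ⁅y₁, y⁆) (hc : r c = ⁅x, y₁⁆) :
    r (b + t • c) = ⁅y₁, r a⁆ := by
  rw [map_add, map_smul, hb, hc, ha, lie_sub, lie_smul, ← lie_skew x y₁]
  module

end

section

variable {g₀ g : Type*} [LieRing g₀] [LieAlgebra ℂ g₀] [LieRing g] [LieAlgebra ℂ g]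
  {r : g₀ →ₗ⁅ℂ⁆ g} {q : g →ₗ⁅ℂ⁆ ℂ} {x : g}

theorem exists_eq_sub_smul_of_exact (hexact : ∀ y : g, q y = 0 ↔ ∃ a : g₀, r a = y)
    (hx : q x = 1) (y : g) : ∃ a : g₀, r a = y - q y • x :=
  (hexact _).mp (by simp [hx])

theorem exists_eq_lie_of_exact (hexact : ∀ y : g, q y = 0 ↔ ∃ a : g₀, r a = y) (y z : g) :
    ∃ a : g₀, r a = ⁅y, z⁆ :=
  (hexact _).mp (q.map_lie_eq_zero y z)

theorem lie_sub_smul_eq_lie (y z : g) : ⁅y, z⁆ - q ⁅y, z⁆ • x = ⁅y, z⁆ := by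
  rw [q.map_lie_eq_zero, zero_smul, sub_zero]

theorem extension_form_invariant
    (hexact : ∀ y : g, q y = 0 ↔ ∃ a : g₀, r a = y) (hx : q x = 1)
    {B₀ : g₀ →ₗ[ℂ] g₀ →ₗ[ℂ] ℂ} (hsymm : ∀ a b : g₀, B₀ a b = B₀ b a)
    (hinv : ∀ (y : g) (a b a' b' : g₀), r a' = ⁅y, r a⁆ → r b' = ⁅y, r b⁆ →
      B₀ a' b + B₀ a b' = 0)
    {ω : g → g → ℂ}
    (hω : ∀ (y₁ y₂ : g) (a₁ a₂ : g₀), r a₁ = ⁅x, y₁⁆ → r a₂ = y₂ - q y₂ • x →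
      ω y₁ y₂ = -B₀ a₁ a₂)
    {B : g × ℂ → g × ℂ → ℂ}
    (hB : ∀ (y₁ y₂ : g) (c₁ c₂ : ℂ) (a₁ a₂ : g₀),
      r a₁ = y₁ - q y₁ • x → r a₂ = y₂ - q y₂ • x →
      B (y₁, c₁) (y₂, c₂) = B₀ a₁ a₂ - c₁ * q y₂ - c₂ * q y₁)
    (y₁ y₂ y₃ : g) (c₂ c₃ : ℂ) :
    B (⁅y₁, y₂⁆, ω y₁ y₂) (y₃, c₃) + B (y₂, c₂) (⁅y₁, y₃⁆, ω y₁ y₃) = 0 := by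
  obtain ⟨a₂, ha₂⟩ := exists_eq_sub_smul_of_exact hexact hx y₂
  obtain ⟨a₃, ha₃⟩ := exists_eq_sub_smul_of_exact hexact hx y₃
  obtain ⟨b₂, hb₂⟩ := exists_eq_lie_of_exact hexact y₁ y₂
  obtain ⟨b₃, hb₃⟩ := exists_eq_lie_of_exact hexact y₁ y₃
  obtain ⟨c, hc⟩ := exists_eq_lie_of_exact hexact x y₁
  have hB₂ : B (⁅y₁, y₂⁆, ω y₁ y₂) (y₃, c₃) = B₀ b₂ a₃ + q y₃ * B₀ c a₂ := by
    rw [hB _ _ _ _ _ _ (hb₂.trans (lie_sub_smul_eq_lie y₁ y₂).symm) ha₃,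
      hω y₁ y₂ c a₂ hc ha₂, q.map_lie_eq_zero]
    ring
  have hB₃ : B (y₂, c₂) (⁅y₁, y₃⁆, ω y₁ y₃) = B₀ a₂ b₃ + q y₂ * B₀ c a₃ := by
    rw [hB _ _ _ _ _ _ ha₂ (hb₃.trans (lie_sub_smul_eq_lie y₁ y₃).symm),
      hω y₁ y₃ c a₃ hc ha₃, q.map_lie_eq_zero]
    ring
  have hinv₁ := hinv y₁ a₂ a₃ _ _ (map_add_smul_eq_lie_of_eq_sub_smul ha₂ hb₂ hc)
    (map_add_smul_eq_lie_of_eq_sub_smul ha₃ hb₃ hc)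
  simp only [map_add, map_smul, LinearMap.add_apply, LinearMap.smul_apply, smul_eq_mul] at hinv₁
  rw [hB₂, hB₃]
  linear_combination hinv₁ + q y₃ * hsymm c a₂

end

theorem extension_bilinear_form_invariant_general
    {g₀ g : Type*} [LieRing g₀] [LieAlgebra ℂ g₀] [LieRing g] [LieAlgebra ℂ g]
    (r : g₀ →ₗ⁅ℂ⁆ g)
    (q : g →ₗ⁅ℂ⁆ ℂ)
    (hexact : ∀ y : g, q y = 0 ↔ ∃ a : g₀, r a = y)
    (B₀ : g₀ →ₗ[ℂ] g₀ →ₗ[ℂ] ℂ)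
    (hsymm : ∀ a b : g₀, B₀ a b = B₀ b a)
    (hinv : ∀ (y : g) (a b a' b' : g₀), r a' = ⁅y, r a⁆ → r b' = ⁅y, r b⁆ →
      B₀ a' b + B₀ a b' = 0)
    (x : g) (hx : q x = 1)
    (ω : g → g → ℂ)
    (hω : ∀ (y₁ y₂ : g) (a₁ a₂ : g₀), r a₁ = ⁅x, y₁⁆ → r a₂ = y₂ - q y₂ • x →
      ω y₁ y₂ = -B₀ a₁ a₂)
    (B : g × ℂ → g × ℂ → ℂ)
    (hB : ∀ (y₁ y₂ : g) (c₁ c₂ : ℂ) (a₁ a₂ : g₀),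
      r a₁ = y₁ - q y₁ • x → r a₂ = y₂ - q y₂ • x →
      B (y₁, c₁) (y₂, c₂) = B₀ a₁ a₂ - c₁ * q y₂ - c₂ * q y₁) :
    (∀ z₁ z₂ z₃ : g × ℂ,
      B (⁅z₁.1, z₂.1⁆, ω z₁.1 z₂.1) z₃ + B z₂ (⁅z₁.1, z₃.1⁆, ω z₁.1 z₃.1) = 0) ∧
    B ((0 : g), (1 : ℂ)) ((0 : g), (1 : ℂ)) = 0 ∧
    (∀ (y : g) (c : ℂ), B ((0 : g), (1 : ℂ)) (y, c) = -q y) := by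
  have hcentral (y : g) (c : ℂ) : B ((0 : g), (1 : ℂ)) (y, c) = -q y := by
    obtain ⟨a, ha⟩ := exists_eq_sub_smul_of_exact hexact hx y
    rw [hB 0 y 1 c 0 a (by simp) ha]
    simp
  refine ⟨fun z₁ z₂ z₃ => extension_form_invariant hexact hx hsymm hinv hω hB _ _ _ _ _,
    ?_, hcentral⟩
  simpa using hcentral 0 1

/-- In the construction of the central extension `g̃_x = g ⊕ ℂ`
by the cocycle `ω(y₁,y₂) = -B₀(r⁻¹[x, pr₀ y₁], pr₀ y₂)`, the symmetric bilinear
form `B((y₁,c₁),(y₂,c₂)) := B₀(a₁,a₂) - c₁t₂ - c₂t₁` (where `yᵢ = r aᵢ + tᵢ x`,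
`tᵢ = q yᵢ`) is invariant under the adjoint action of `g̃_x`, satisfies
`B(j(1),j(1)) = 0` for `j(1) = (0,1)`, and `B(j(1),(r a + t x, c)) = -t`. -/
theorem extension_bilinear_form_invariant
    {g₀ g : Type*} [LieRing g₀] [LieAlgebra ℂ g₀] [LieRing g] [LieAlgebra ℂ g]
    (r : g₀ →ₗ⁅ℂ⁆ g) (hr : Function.Injective r)
    (q : g →ₗ⁅ℂ⁆ ℂ) (hq : Function.Surjective q)
    (hexact : ∀ y : g, q y = 0 ↔ ∃ a : g₀, r a = y)
    (B₀ : g₀ →ₗ[ℂ] g₀ →ₗ[ℂ] ℂ)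
    (hsymm : ∀ a b : g₀, B₀ a b = B₀ b a)
    (hinv : ∀ (y : g) (a b a' b' : g₀), r a' = ⁅y, r a⁆ → r b' = ⁅y, r b⁆ →
      B₀ a' b + B₀ a b' = 0)
    (x : g) (hx : q x = 1)
    (ω : g → g → ℂ)
    (hω : ∀ (y₁ y₂ : g) (a₁ a₂ : g₀), r a₁ = ⁅x, y₁⁆ → r a₂ = y₂ - q y₂ • x →
      ω y₁ y₂ = -B₀ a₁ a₂)
    (B : g × ℂ → g × ℂ → ℂ)
    (hB : ∀ (y₁ y₂ : g) (c₁ c₂ : ℂ) (a₁ a₂ : g₀),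
      r a₁ = y₁ - q y₁ • x → r a₂ = y₂ - q y₂ • x →
      B (y₁, c₁) (y₂, c₂) = B₀ a₁ a₂ - c₁ * q y₂ - c₂ * q y₁) :
    (∀ z₁ z₂ z₃ : g × ℂ,
      B (⁅z₁.1, z₂.1⁆, ω z₁.1 z₂.1) z₃ + B z₂ (⁅z₁.1, z₃.1⁆, ω z₁.1 z₃.1) = 0) ∧
    B ((0 : g), (1 : ℂ)) ((0 : g), (1 : ℂ)) = 0 ∧
    (∀ (y : g) (c : ℂ), B ((0 : g), (1 : ℂ)) (y, c) = -q y) :=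
  extension_bilinear_form_invariant_general r q hexact B₀ hsymm hinv x hx ω hω B hB
end
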